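/- In particular (i = 0 case of the Goodman–Hartshorne lemma): Γ(U, O_U) ≅ colim_n H^0(V, O_V(nD)), where U = V − Supp(D); this is the direct limit, not the direct sum ⊕_n H^0(V, O_V(nD)). -/

import Mathlib

/-!
STATEMENT 14 (Goodman–Hartshorne, `i = 0` case):
`Γ(U, O_U) ≅ colim_n H⁰(V, O_V(nD))` where `U = V − Supp(D)`, `V` is a
Noetherian (integral) scheme and `D` an effective Cartier divisor with
canonical section `s`, the transition maps of the colimit being multiplication
by `s`.  (This is the direct limit, not the direct sum.)

Encoding: inside the function field `K(V)`, multiplication by the canonical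
section identifies `H⁰(V, O_V(nD))` with the set `divisorSections n` of
rational functions `f` such that `f·gᵢⁿ` is regular on `U i` for all local
equations `g i` of `D`; the transition maps become the inclusions
`divisorSections n ⊆ divisorSections (n+1)`, so the direct limit is the
increasing union `⋃ n, divisorSections n`, and `Γ(U, O_U)` is the set of
rational functions regular on `U = ⨆ i, D(g i)`.  The isomorphism is the
equality of these subsets of `K(V)`.
-/


open AlgebraicGeometry CategoryTheory Opposite TopologicalSpace

/-- The rational functions on an integral scheme `X` that are regular on a
nonempty open subset `U`, i.e. the image of `Γ(X, U)` in the function field. -/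
noncomputable def regularOn (X : AlgebraicGeometry.Scheme.{0}) [IsIntegral X]
    (U : X.Opens) (hU : Nonempty U) : Set X.functionField :=
  haveI := hU
  Set.range (X.germToFunctionField U)

/-- The image in the function field of a section over a nonempty open set. -/
noncomputable def genericGerm (X : AlgebraicGeometry.Scheme.{0}) [IsIntegral X]
    (U : X.Opens) (hU : Nonempty U) (s : Γ(X, U)) : X.functionField :=
  haveI := hU
  X.germToFunctionField U s

/-- Given an effective Cartier divisor `D` presented by local equations
`g i ∈ Γ(X, U i)` on an open cover `U`, this is
`H⁰(X, O_X(m·D)) = { f ∈ K(X) | ∀ i, f · gᵢᵐ is regular on U i }`. -/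
noncomputable def divisorSections (X : AlgebraicGeometry.Scheme.{0}) [IsIntegral X]
    {ι : Type} (U : ι → X.Opens) (hU : ∀ i, Nonempty (U i))
    (g : ∀ i, Γ(X, U i)) (m : ℕ) : Set X.functionField :=
  { f | ∀ i, f * (genericGerm X (U i) (hU i) (g i)) ^ m ∈ regularOn X (U i) (hU i) }

/-- The canonical map `ℂ → K(X)` induced by the structure morphism
`f : X → Spec ℂ`. -/
noncomputable def structureToFunctionField (X : AlgebraicGeometry.Scheme.{0})
    [IsIntegral X] (f : X ⟶ AlgebraicGeometry.Spec (CommRingCat.of ℂ)) :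
    ℂ →+* X.functionField :=
  haveI : Nonempty (⊤ : X.Opens) :=
    ⟨⟨(inferInstance : Nonempty X).some, trivial⟩⟩
  ((Scheme.ΓSpecIso (CommRingCat.of ℂ)).inv ≫ f.appTop ≫ X.germToFunctionField ⊤).hom

/-- The `ℂ`-algebra structure on `K(X)[t]` induced by the structure morphism. -/
noncomputable def polyAlgebra (X : AlgebraicGeometry.Scheme.{0}) [IsIntegral X]
    (str : ℂ →+* X.functionField) : Algebra ℂ (Polynomial X.functionField) :=
  (Polynomial.C.comp str).toAlgebra

/-- The section ring `R(X, D) = ⊕_{m ≥ 0} H⁰(X, O_X(mD))`, realized as the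
subalgebra of `K(X)[t]` generated by the elements `f·tᵐ` with
`f ∈ H⁰(X, O_X(mD))`. -/
noncomputable def sectionRing (X : AlgebraicGeometry.Scheme.{0}) [IsIntegral X]
    (str : ℂ →+* X.functionField) {ι : Type} (U : ι → X.Opens)
    (hU : ∀ i, Nonempty (U i)) (g : ∀ i, Γ(X, U i)) :
    @Subalgebra ℂ (Polynomial X.functionField) _ _ (polyAlgebra X str) :=
  @Algebra.adjoin ℂ (Polynomial X.functionField) _ _ (polyAlgebra X str)
    { p | ∃ (m : ℕ) (f : X.functionField),
        f ∈ divisorSections X U hU g m ∧ p = Polynomial.C f * Polynomial.X ^ m }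

/-- `κ(D, X) = d`: the section ring `R(X, D)` has transcendence degree `d + 1`
over ℂ, i.e. it admits a transcendence basis indexed by `Fin (d+1)`. -/
noncomputable def hasIitakaDimension (X : AlgebraicGeometry.Scheme.{0})
    [IsIntegral X] (f : X ⟶ AlgebraicGeometry.Spec (CommRingCat.of ℂ))
    {ι : Type} (U : ι → X.Opens) (hU : ∀ i, Nonempty (U i))
    (g : ∀ i, Γ(X, U i)) (d : ℕ) : Prop :=
  letI := polyAlgebra X (structureToFunctionField X f)
  ∃ x : Fin (d + 1) → (sectionRing X (structureToFunctionField X f) U hU g),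
    IsTranscendenceBasis ℂ x

/-!
A rational function `f` regular on `U₀ = ⋃ D(gᵢ)` becomes regular on `Uᵢ` after multiplication
by a power of `gᵢ`: this is the qcqs lemma `Γ(D(gᵢ)) = Γ(Uᵢ)_{gᵢ}`. Since `V` is Noetherian,
finitely many `Uᵢ` cover it, so a single exponent `N` works for all of them, and the transition
functions `gⱼ / gᵢ` carry `f·gᵢᴺ` to `f·gⱼᴺ` on `Uᵢ ∩ Uⱼ`. Conversely, if `f·gᵢᵐ` is regular on
`Uᵢ` then `f` is regular on `D(gᵢ)`, where `gᵢ` is a unit. In both directions the local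
statements glue to the whole open set.
-/

lemma genericPoint_mem_of_nonempty {X : Scheme} [IrreducibleSpace X] {U : X.Opens}
    (hU : Nonempty U) : genericPoint X ∈ U :=
  ((genericPoint_spec X).mem_open_set_iff U.isOpen).mpr (by simpa using hU)

lemma subsingleton_sections_of_not_nonempty {X : Scheme} {W : X.Opens} (hW : ¬ Nonempty W) :
    Subsingleton Γ(X, W) := by
  obtain rfl : W = ⊥ := eq_bot_iff.mpr fun x hx => (hW ⟨⟨x, hx⟩⟩).elim
  infer_instance

section RegularOn

variable {X : Scheme.{0}} [IsIntegral X]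

lemma genericGerm_mem_regularOn {U : X.Opens} (hU : Nonempty U) (s : Γ(X, U)) :
    genericGerm X U hU s ∈ regularOn X U hU :=
  ⟨s, rfl⟩

lemma genericGerm_res {U W : X.Opens} (hU : Nonempty U) (hW : Nonempty W) (i : W ⟶ U)
    (s : Γ(X, U)) : genericGerm X W hW (X.presheaf.map i.op s) = genericGerm X U hU s :=
  X.presheaf.germ_res_apply _ _ _ s

lemma genericGerm_mul {U : X.Opens} (hU : Nonempty U) (s t : Γ(X, U)) :
    genericGerm X U hU (s * t) = genericGerm X U hU s * genericGerm X U hU t :=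
  map_mul _ _ _

lemma genericGerm_pow {U : X.Opens} (hU : Nonempty U) (s : Γ(X, U)) (n : ℕ) :
    genericGerm X U hU (s ^ n) = genericGerm X U hU s ^ n :=
  map_pow _ _ _

lemma genericGerm_one {U : X.Opens} (hU : Nonempty U) : genericGerm X U hU 1 = 1 :=
  map_one _

lemma mul_mem_regularOn {U : X.Opens} (hU : Nonempty U) {f f' : X.functionField}
    (hf : f ∈ regularOn X U hU) (hf' : f' ∈ regularOn X U hU) : f * f' ∈ regularOn X U hU := by
  obtain ⟨s, rfl⟩ := hf
  obtain ⟨t, rfl⟩ := hf'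
  exact ⟨s * t, genericGerm_mul hU s t⟩

lemma pow_mem_regularOn {U : X.Opens} (hU : Nonempty U) {f : X.functionField}
    (hf : f ∈ regularOn X U hU) (n : ℕ) : f ^ n ∈ regularOn X U hU := by
  obtain ⟨s, rfl⟩ := hf
  exact ⟨s ^ n, genericGerm_pow hU s n⟩

lemma regularOn_anti {U W : X.Opens} (hU : Nonempty U) (hW : Nonempty W) (hWU : W ≤ U) :
    regularOn X U hU ⊆ regularOn X W hW := by
  rintro _ ⟨s, rfl⟩
  exact ⟨_, genericGerm_res hU hW (homOfLE hWU) s⟩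

lemma mul_pow_mem_regularOn_of_le {U : X.Opens} (hU : Nonempty U) {f a : X.functionField}
    (ha : a ∈ regularOn X U hU) {n m : ℕ} (hnm : n ≤ m) (hf : f * a ^ n ∈ regularOn X U hU) :
    f * a ^ m ∈ regularOn X U hU := by
  rw [← Nat.add_sub_cancel' hnm, pow_add, ← mul_assoc]
  exact mul_mem_regularOn hU hf (pow_mem_regularOn hU ha _)

lemma mul_pow_mem_regularOn_of_div_mem {U W : X.Opens} (hU : Nonempty U) (hW : Nonempty W)
    (hWU : W ≤ U) {f a b : X.functionField} (ha : a ≠ 0) (hba : b / a ∈ regularOn X W hW) {n : ℕ}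
    (hf : f * a ^ n ∈ regularOn X U hU) : f * b ^ n ∈ regularOn X W hW := by
  have hfb : f * b ^ n = f * a ^ n * (b / a) ^ n := by
    rw [div_pow, mul_assoc, mul_div_cancel₀ _ (pow_ne_zero n ha)]
  rw [hfb]
  exact mul_mem_regularOn hW (regularOn_anti hU hW hWU hf) (pow_mem_regularOn hW hba n)

/-- Rational functions glue: sections over the pieces of a cover with a common germ `f` at the
generic point are compatible, because germs at the generic point are injective. -/
lemma mem_regularOn_of_le_iSup {ι : Type} (W : ι → X.Opens) {U : X.Opens} (hU : Nonempty U)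
    (hUW : U ≤ ⨆ i, W i) (hWU : ∀ i, W i ≤ U) {f : X.functionField}
    (hf : ∀ i (hWi : Nonempty (W i)), f ∈ regularOn X (W i) hWi) : f ∈ regularOn X U hU := by
  classical
  let s : ∀ i, Γ(X, W i) := fun i => if hWi : Nonempty (W i) then (hf i hWi).choose else 0
  have hs : ∀ i (hWi : Nonempty (W i)), genericGerm X (W i) hWi (s i) = f := fun i hWi => by
    simp only [s, dif_pos hWi]
    exact (hf i hWi).choose_spec
  have hcompat : TopCat.Presheaf.IsCompatible X.sheaf.1 W s := by
    intro i j
    by_cases hij : Nonempty ((W i ⊓ W j : X.Opens))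
    · apply germ_injective_of_isIntegral X (genericPoint X) (genericPoint_mem_of_nonempty hij)
      have hWi : Nonempty (W i) := hij.map fun x => ⟨x.1, x.2.1⟩
      have hWj : Nonempty (W j) := hij.map fun x => ⟨x.1, x.2.2⟩
      change genericGerm X _ hij (X.presheaf.map _ (s i)) =
        genericGerm X _ hij (X.presheaf.map _ (s j))
      rw [genericGerm_res hWi, hs i hWi, genericGerm_res hWj, hs j hWj]
    · exact (subsingleton_sections_of_not_nonempty hij).elim _ _
  obtain ⟨t, ht, -⟩ := X.sheaf.existsUnique_gluing' W U (fun i => homOfLE (hWU i)) hUW s hcompat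
  obtain ⟨i, hi⟩ := Opens.mem_iSup.mp (hUW (genericPoint_mem_of_nonempty hU))
  have hWi : Nonempty (W i) := ⟨⟨_, hi⟩⟩
  have hti := hs i hWi
  rw [← ht i] at hti
  exact ⟨t, (genericGerm_res hU hWi (homOfLE (hWU i)) t).symm.trans hti⟩

lemma mem_regularOn_basicOpen_of_mul_pow_mem {U : X.Opens} (hU : Nonempty U) (s : Γ(X, U))
    (hD : Nonempty (X.basicOpen s)) {f : X.functionField} {m : ℕ}
    (hf : f * genericGerm X U hU s ^ m ∈ regularOn X U hU) :
    f ∈ regularOn X (X.basicOpen s) hD := by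
  obtain ⟨v, hv⟩ : ∃ v : Γ(X, X.basicOpen s),
      X.presheaf.map (homOfLE (X.basicOpen_le s)).op s * v = 1 :=
    (RingedSpace.isUnit_res_basicOpen X.toRingedSpace s).exists_right_inv
  have hsv : genericGerm X U hU s * genericGerm X _ hD v = 1 := by
    rw [← genericGerm_res hU hD (homOfLE (X.basicOpen_le s)), ← genericGerm_mul, hv,
      genericGerm_one]
  have hmem := mul_mem_regularOn hD (regularOn_anti hU hD (X.basicOpen_le s) hf)
    (pow_mem_regularOn hD (genericGerm_mem_regularOn hD v) m)
  rwa [mul_assoc, ← mul_pow, hsv, one_pow, mul_one] at hmem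

/-- The qcqs lemma `Γ(X, D(s)) = Γ(X, U)_s`, read in the function field. -/
lemma exists_mul_pow_mem_regularOn_of_mem_basicOpen {U : X.Opens} (hU : Nonempty U)
    (hUc : IsCompact (U : Set X)) (hUqs : IsQuasiSeparated (U : Set X)) (s : Γ(X, U))
    (hD : Nonempty (X.basicOpen s)) {f : X.functionField}
    (hf : f ∈ regularOn X (X.basicOpen s) hD) :
    ∃ n, f * genericGerm X U hU s ^ n ∈ regularOn X U hU := by
  obtain ⟨t, rfl⟩ := hf
  obtain ⟨n, y, hy⟩ := exists_eq_pow_mul_of_isCompact_of_isQuasiSeparated X U hUc hUqs s t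
  refine ⟨n, y, ?_⟩
  have hgerm := congrArg (genericGerm X _ hD) hy
  simp only [TopCat.Presheaf.restrictOpenCommRingCat_apply] at hgerm
  rwa [genericGerm_mul, genericGerm_pow, genericGerm_res hU hD,
    genericGerm_res hU hD, mul_comm] at hgerm

lemma nonempty_basicOpen_of_genericGerm_ne_zero {U : X.Opens} (hU : Nonempty U) {s : Γ(X, U)}
    (hs : genericGerm X U hU s ≠ 0) : Nonempty (X.basicOpen s) :=
  ⟨⟨genericPoint X, (X.mem_basicOpen s _ (genericPoint_mem_of_nonempty hU)).mpr (Ne.isUnit hs)⟩⟩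

lemma iUnion_divisorSections_subset_regularOn {ι : Type} (U : ι → X.Opens)
    (hU : ∀ i, Nonempty (U i)) (g : ∀ i, Γ(X, U i)) (U₀ : X.Opens)
    (hU₀ : U₀ ≤ ⨆ i, X.basicOpen (g i)) (hle : ∀ i, X.basicOpen (g i) ≤ U₀)
    (hU₀ne : Nonempty U₀) :
    (⋃ m, divisorSections X U hU g m) ⊆ regularOn X U₀ hU₀ne := by
  intro f hf
  obtain ⟨m, hf⟩ := Set.mem_iUnion.mp hf
  refine mem_regularOn_of_le_iSup (fun i => X.basicOpen (g i)) hU₀ne hU₀ hle fun i hD => ?_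
  exact mem_regularOn_basicOpen_of_mul_pow_mem (hU i) (g i) hD (hf i)

lemma regularOn_subset_iUnion_divisorSections [NoetherianSpace X] {ι : Type}
    (U : ι → X.Opens) (hU : ∀ i, Nonempty (U i)) (hcov : ∀ x : X, ∃ i, x ∈ U i)
    (g : ∀ i, Γ(X, U i)) (hg : ∀ i, genericGerm X (U i) (hU i) (g i) ≠ 0)
    (hcompat : ∀ i j (h : Nonempty ((U i ⊓ U j : X.Opens))),
      genericGerm X (U j) (hU j) (g j) / genericGerm X (U i) (hU i) (g i) ∈
        regularOn X (U i ⊓ U j) h)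
    (U₀ : X.Opens) (hle : ∀ i, X.basicOpen (g i) ≤ U₀) (hU₀ne : Nonempty U₀) :
    regularOn X U₀ hU₀ne ⊆ ⋃ m, divisorSections X U hU g m := by
  intro f hf
  have hexp : ∀ i, ∃ n, f * genericGerm X (U i) (hU i) (g i) ^ n ∈ regularOn X (U i) (hU i) :=
    fun i => exists_mul_pow_mem_regularOn_of_mem_basicOpen (hU i) (NoetherianSpace.isCompact _)
      (.of_quasiSeparatedSpace _) (g i) (nonempty_basicOpen_of_genericGerm_ne_zero (hU i) (hg i))
      (regularOn_anti hU₀ne _ (hle i) hf)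
  choose n hn using hexp
  obtain ⟨s, hs⟩ := isCompact_univ.elim_finite_subcover (fun i => (U i : Set X))
    (fun i => (U i).isOpen) fun x _ => Set.mem_iUnion.mpr (hcov x)
  refine Set.mem_iUnion.mpr ⟨s.sup n, fun j => ?_⟩
  refine mem_regularOn_of_le_iSup (fun i : s => U i ⊓ U j) (hU j) (fun x hx => ?_)
    (fun _ => inf_le_right) fun i hij => ?_
  · obtain ⟨i, hi, hxi⟩ := Set.mem_iUnion₂.mp (hs (Set.mem_univ x))
    exact Opens.mem_iSup.mpr ⟨⟨i, hi⟩, hxi, hx⟩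
  · exact mul_pow_mem_regularOn_of_div_mem (hU i) hij inf_le_left (hg i) (hcompat i j hij)
      (mul_pow_mem_regularOn_of_le (hU i) (genericGerm_mem_regularOn _ _) (Finset.le_sup i.2)
        (hn i))

end RegularOn

theorem goodman_hartshorne_global_sections_colimit
    (V : AlgebraicGeometry.Scheme.{0}) [IsIntegral V]
    [AlgebraicGeometry.IsNoetherian V]
    {ι : Type} (U : ι → V.Opens) (hU : ∀ i, Nonempty (U i))
    (hcov : ∀ x : V, ∃ i, x ∈ U i)
    (g : ∀ i, Γ(V, U i))
    (hg : ∀ i, genericGerm V (U i) (hU i) (g i) ≠ 0)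
    (hcompat : ∀ i j (h : Nonempty ((U i ⊓ U j : V.Opens))),
      genericGerm V (U i) (hU i) (g i) / genericGerm V (U j) (hU j) (g j) ∈
        regularOn V (U i ⊓ U j) h ∧
      genericGerm V (U j) (hU j) (g j) / genericGerm V (U i) (hU i) (g i) ∈
        regularOn V (U i ⊓ U j) h)
    (U₀ : V.Opens) (hU₀ : U₀ = ⨆ i, V.basicOpen (g i))
    (hU₀ne : Nonempty U₀) :
    (⋃ m : ℕ, divisorSections V U hU g m) = regularOn V U₀ hU₀ne := by
  have hle : ∀ i, V.basicOpen (g i) ≤ U₀ :=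
    fun i => hU₀ ▸ le_iSup (fun i => V.basicOpen (g i)) i
  exact (iUnion_divisorSections_subset_regularOn U hU g U₀ hU₀.le hle hU₀ne).antisymm
    (regularOn_subset_iUnion_divisorSections U hU hcov g hg (fun i j h => (hcompat i j h).2)
      U₀ hle hU₀ne)
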